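/- arXiv:1605.04061 — 6 statements merged into one kernel-verified Lean document; each statement's English description precedes it below -/
import Mathlib

section
/- In the polynomial ring ℂ[x₂,x₃,x₄], let 𝒯₁ be the 3×3 matrix with rows (2x₂, 3x₃, 4x₄), (x₃, x₄, 12x₂x₃), ((2/3)x₄ − 2x₂², 3x₂x₃, 3x₃² + 2x₂x₄). Then 3·det 𝒯₁ = ĝ₂³ − 27ĝ₃², i.e. 3·det 𝒯₁ = −432x₂³x₃² + 36x₂²x₄² + 108x₂x₃²x₄ − 27x₃⁴ − 8x₄³, where ĝ₂ = 12x₂² − 2x₄ and ĝ₃ = −8x₂³ + 2x₂x₄ − x₃². -/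
open MvPolynomial

noncomputable section

/-- The polynomial ring ℂ[x₂,x₃,x₄]; `X 0 = x₂`, `X 1 = x₃`, `X 2 = x₄`. -/
abbrev R3 : Type := MvPolynomial (Fin 3) ℂ

def x2 : R3 := X 0
def x3 : R3 := X 1
def x4 : R3 := X 2

/-- ĝ₂ = 12x₂² − 2x₄ -/
def g2hat : R3 := 12 * x2 ^ 2 - 2 * x4

/-- ĝ₃ = −8x₂³ + 2x₂x₄ − x₃² -/
def g3hat : R3 := -8 * x2 ^ 3 + 2 * x2 * x4 - x3 ^ 2

/-- The matrix 𝒯₁. -/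
def T1 : Matrix (Fin 3) (Fin 3) R3 :=
  !![2 * x2, 3 * x3, 4 * x4;
     x3, x4, 12 * x2 * x3;
     C (2/3 : ℂ) * x4 - 2 * x2 ^ 2, 3 * x2 * x3, 3 * x3 ^ 2 + 2 * x2 * x4]

/-- `t` stands for the entry `2/3` of `T1`, so that the identity holds over any commutative ring. -/
theorem three_mul_det_eq_of_three_mul_eq_two {A : Type*} [CommRing A] {t : A}
    (ht : 3 * t = 2) (a b c : A) :
    3 * !![2 * a, 3 * b, 4 * c;
          b, c, 12 * a * b;
          t * c - 2 * a ^ 2, 3 * a * b, 3 * b ^ 2 + 2 * a * c].det =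
      -432 * a ^ 3 * b ^ 2 + 36 * a ^ 2 * c ^ 2 + 108 * a * b ^ 2 * c
        - 27 * b ^ 4 - 8 * c ^ 3 := by
  simp only [Matrix.det_fin_three, Matrix.of_apply, Matrix.cons_val', Matrix.cons_val_zero,
    Matrix.cons_val_one, Matrix.cons_val, Matrix.cons_val_fin_one]
  linear_combination (36 * a * b ^ 2 * c - 4 * c ^ 3) * ht

theorem three_mul_C_two_thirds : (3 : R3) * C (2 / 3) = 2 := by
  rw [← map_ofNat C 3, ← map_mul, ← map_ofNat C 2]
  norm_num

theorem three_det_T1 :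
    3 * T1.det = g2hat ^ 3 - 27 * g3hat ^ 2 ∧
    3 * T1.det =
      -432 * x2 ^ 3 * x3 ^ 2 + 36 * x2 ^ 2 * x4 ^ 2 + 108 * x2 * x3 ^ 2 * x4
        - 27 * x3 ^ 4 - 8 * x4 ^ 3 := by
  have expanded := three_mul_det_eq_of_three_mul_eq_two three_mul_C_two_thirds x2 x3 x4
  refine ⟨?_, expanded⟩
  rw [T1, expanded, g2hat, g3hat]
  ring

end
end

section
/- Let α ∈ ℂ, let k ∈ ℂ be nonzero, and let x₂, x₄, x₆ : ℝ → ℂ be differentiable functions satisfying the dynamical system x₂' = (2/3)x₄ + 2(α−1)x₂², x₄' = 3x₆ + 2(2α+1)x₂x₄, x₆' = 6(α+1)x₂x₆. Then the function U = (1/k)x₂ satisfies the third-order differential equation U''' − 2k(7α+2)UU'' − 2k(4α−1)(U')² + 24k²(3α²+α−1)U²U' − 24k³(α+1)(α−1)(2α+1)U⁴ = 0. -/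
/-! Differentiating `x₂' = (2/3)x₄ + 2(α−1)x₂²` twice along the system expresses `x₂''` and `x₂'''`
as polynomials in `x₂, x₄, x₆`. In the third-order expression with `k = 1` the `x₄` and `x₆` terms
cancel, so `x₂` itself solves the equation. Every term of the equation scales by `1/k` under
`U = x₂/k`, which gives the general case. -/

namespace DeformedSystem

variable {α : ℂ} {x2 x4 x6 : ℝ → ℂ}

theorem deriv_x2_eq (h2 : ∀ t, HasDerivAt x2 (2/3 * x4 t + 2 * (α - 1) * x2 t ^ 2) t) :
    deriv x2 = fun t => 2/3 * x4 t + 2 * (α - 1) * x2 t ^ 2 :=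
  funext fun t => (h2 t).deriv

theorem hasDerivAt_deriv_x2 (h2 : ∀ t, HasDerivAt x2 (2/3 * x4 t + 2 * (α - 1) * x2 t ^ 2) t)
    (h4 : ∀ t, HasDerivAt x4 (3 * x6 t + 2 * (2 * α + 1) * x2 t * x4 t) t) (t : ℝ) :
    HasDerivAt (deriv x2)
      (2 * x6 t + 4/3 * (4 * α - 1) * x2 t * x4 t + 8 * (α - 1) ^ 2 * x2 t ^ 3) t := by
  rw [deriv_x2_eq h2]
  refine ((h4 t).const_mul (2/3)).fun_add (((h2 t).fun_pow 2).const_mul (2 * (α - 1)))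
    |>.congr_deriv ?_
  norm_num
  ring

theorem iteratedDeriv_two_x2 (h2 : ∀ t, HasDerivAt x2 (2/3 * x4 t + 2 * (α - 1) * x2 t ^ 2) t)
    (h4 : ∀ t, HasDerivAt x4 (3 * x6 t + 2 * (2 * α + 1) * x2 t * x4 t) t) :
    iteratedDeriv 2 x2 =
      fun t => 2 * x6 t + 4/3 * (4 * α - 1) * x2 t * x4 t + 8 * (α - 1) ^ 2 * x2 t ^ 3 := by
  rw [iteratedDeriv_succ, iteratedDeriv_one]
  exact funext fun t => (hasDerivAt_deriv_x2 h2 h4 t).deriv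

theorem iteratedDeriv_three_x2 (h2 : ∀ t, HasDerivAt x2 (2/3 * x4 t + 2 * (α - 1) * x2 t ^ 2) t)
    (h4 : ∀ t, HasDerivAt x4 (3 * x6 t + 2 * (2 * α + 1) * x2 t * x4 t) t)
    (h6 : ∀ t, HasDerivAt x6 (6 * (α + 1) * x2 t * x6 t) t) :
    iteratedDeriv 3 x2 = fun t => 4 * (7 * α + 2) * x2 t * x6 t + 8/9 * (4 * α - 1) * x4 t ^ 2
      + 8 * (6 * α ^ 2 - 5 * α + 2) * x2 t ^ 2 * x4 t + 48 * (α - 1) ^ 3 * x2 t ^ 4 := by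
  rw [iteratedDeriv_succ, iteratedDeriv_two_x2 h2 h4]
  refine funext fun t => HasDerivAt.deriv ?_
  refine (((h6 t).const_mul 2).fun_add (((h2 t).const_mul (4/3 * (4 * α - 1))).fun_mul (h4 t)))
    |>.fun_add (((h2 t).fun_pow 3).const_mul (8 * (α - 1) ^ 2)) |>.congr_deriv ?_
  norm_num
  ring

theorem third_order_equation_x2 (h2 : ∀ t, HasDerivAt x2 (2/3 * x4 t + 2 * (α - 1) * x2 t ^ 2) t)
    (h4 : ∀ t, HasDerivAt x4 (3 * x6 t + 2 * (2 * α + 1) * x2 t * x4 t) t)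
    (h6 : ∀ t, HasDerivAt x6 (6 * (α + 1) * x2 t * x6 t) t) (t : ℝ) :
    iteratedDeriv 3 x2 t
        - 2 * (7 * α + 2) * x2 t * iteratedDeriv 2 x2 t
        - 2 * (4 * α - 1) * (deriv x2 t) ^ 2
        + 24 * (3 * α ^ 2 + α - 1) * (x2 t) ^ 2 * deriv x2 t
        - 24 * (α + 1) * (α - 1) * (2 * α + 1) * (x2 t) ^ 4 = 0 := by
  rw [iteratedDeriv_three_x2 h2 h4 h6, iteratedDeriv_two_x2 h2 h4, deriv_x2_eq h2]
  ring

end DeformedSystem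

/-- If `x₂, x₄, x₆ : ℝ → ℂ` are differentiable and satisfy
`x₂' = (2/3)x₄ + 2(α−1)x₂²`, `x₄' = 3x₆ + 2(2α+1)x₂x₄`, `x₆' = 6(α+1)x₂x₆`,
then `U = (1/k)x₂` satisfies the third-order equation
`U''' − 2k(7α+2)UU'' − 2k(4α−1)(U')² + 24k²(3α²+α−1)U²U' − 24k³(α+1)(α−1)(2α+1)U⁴ = 0`. -/
theorem third_order_equation_from_deformed_system (α k : ℂ) (hk : k ≠ 0)
    (x2 x4 x6 : ℝ → ℂ)
    (hx2 : Differentiable ℝ x2) (hx4 : Differentiable ℝ x4) (hx6 : Differentiable ℝ x6)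
    (h2 : ∀ t, deriv x2 t = 2/3 * x4 t + 2 * (α - 1) * x2 t ^ 2)
    (h4 : ∀ t, deriv x4 t = 3 * x6 t + 2 * (2 * α + 1) * x2 t * x4 t)
    (h6 : ∀ t, deriv x6 t = 6 * (α + 1) * x2 t * x6 t)
    (U : ℝ → ℂ) (hU : U = fun t => 1 / k * x2 t) :
    ∀ t, iteratedDeriv 3 U t
        - 2 * k * (7 * α + 2) * U t * iteratedDeriv 2 U t
        - 2 * k * (4 * α - 1) * (deriv U t) ^ 2
        + 24 * k ^ 2 * (3 * α ^ 2 + α - 1) * (U t) ^ 2 * deriv U t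
        - 24 * k ^ 3 * (α + 1) * (α - 1) * (2 * α + 1) * (U t) ^ 4 = 0 := by
  intro t
  have key := DeformedSystem.third_order_equation_x2
    (fun t => (hx2 t).hasDerivAt.congr_deriv (h2 t))
    (fun t => (hx4 t).hasDerivAt.congr_deriv (h4 t))
    (fun t => (hx6 t).hasDerivAt.congr_deriv (h6 t)) t
  subst hU
  simp only [iteratedDeriv_const_mul_field, deriv_const_mul_field]
  field_simp
  linear_combination key
end

section
/- Let x₂, x₃, x₄, z₄, z₅, z₆ : ℝ² → ℂ be smooth functions of (u₁, u₃) satisfying systems S₁ and S₃. Then the function U = 2x₂ satisfies the Korteweg–de Vries equation ∂³U/∂u₁³ = 6U·∂U/∂u₁ + 4·∂U/∂u₃. -/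
noncomputable section

/-- Partial derivative with respect to the first coordinate `u₁`. -/
def d1 (f : ℝ × ℝ → ℂ) : ℝ × ℝ → ℂ := fun p => deriv (fun s => f (s, p.2)) p.1

/-- Partial derivative with respect to the second coordinate `u₃`. -/
def d3 (f : ℝ × ℝ → ℂ) : ℝ × ℝ → ℂ := fun p => deriv (fun s => f (p.1, s)) p.2

lemma diff1 {f : ℝ × ℝ → ℂ} (hf : ContDiff ℝ (⊤ : ℕ∞) f) (p : ℝ × ℝ) :
    DifferentiableAt ℝ (fun s => f (s, p.2)) p.1 :=
  (hf.differentiable (by simp) (p.1, p.2)).comp p.1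
    ((DifferentiableAt.prodMk differentiableAt_id (differentiableAt_const p.2)))

lemma d1_const_mul {f : ℝ × ℝ → ℂ} (hf : ContDiff ℝ (⊤ : ℕ∞) f) (c : ℂ) (p : ℝ × ℝ) :
    d1 (fun q => c * f q) p = c * d1 f p := by
  simp only [d1]
  exact deriv_const_mul c (diff1 hf p)

lemma d3_const_mul {f : ℝ × ℝ → ℂ} (hf : ContDiff ℝ (⊤ : ℕ∞) f) (c : ℂ) (p : ℝ × ℝ) :
    d3 (fun q => c * f q) p = c * d3 f p := by
  simp only [d3]
  refine deriv_const_mul c ?_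
  exact (hf.differentiable (by simp) (p.1, p.2)).comp p.2
    (DifferentiableAt.prodMk (differentiableAt_const p.1) differentiableAt_id)

/-- If smooth `x₂,x₃,x₄,z₄,z₅,z₆ : ℝ² → ℂ` satisfy systems `S₁` and `S₃`, then
`U = 2x₂` satisfies the KdV equation `∂³U/∂u₁³ = 6U·∂U/∂u₁ + 4·∂U/∂u₃`. -/
theorem KdV_from_S1_S3 (x2 x3 x4 z4 z5 z6 : ℝ × ℝ → ℂ)
    (hx2 : ContDiff ℝ (⊤ : ℕ∞) x2) (hx3 : ContDiff ℝ (⊤ : ℕ∞) x3) (hx4 : ContDiff ℝ (⊤ : ℕ∞) x4)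
    (hz4 : ContDiff ℝ (⊤ : ℕ∞) z4) (hz5 : ContDiff ℝ (⊤ : ℕ∞) z5) (hz6 : ContDiff ℝ (⊤ : ℕ∞) z6)
    -- system S₁
    (e1 : ∀ p, d1 x2 p = x3 p) (e2 : ∀ p, d1 x3 p = x4 p)
    (e3 : ∀ p, d1 x4 p = 4 * (3 * x2 p * x3 p + z5 p))
    (e4 : ∀ p, d1 z4 p = z5 p) (e5 : ∀ p, d1 z5 p = z6 p)
    (e6 : ∀ p, d1 z6 p = 4 * (2 * x2 p * z5 p + x3 p * z4 p))
    -- system S₃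
    (f1 : ∀ p, d3 x2 p = z5 p) (f2 : ∀ p, d3 x3 p = z6 p)
    (f3 : ∀ p, d3 x4 p = 4 * (2 * x2 p * z5 p + x3 p * z4 p))
    (f4 : ∀ p, d3 z4 p = x3 p * z4 p - x2 p * z5 p)
    (f5 : ∀ p, d3 z5 p = x4 p * z4 p - x2 p * z6 p)
    (f6 : ∀ p, d3 z6 p = 8 * x2 p * (x3 p * z4 p - x2 p * z5 p)
      + (x4 p * z5 p - x3 p * z6 p) + 4 * z4 p * z5 p)
    (U : ℝ × ℝ → ℂ) (hU : U = fun p => 2 * x2 p) :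
    ∀ p, d1 (d1 (d1 U)) p = 6 * U p * d1 U p + 4 * d3 U p := by
  subst hU
  intro p
  have hDU : d1 (fun q => 2 * x2 q) = fun q => 2 * x3 q := by
    funext q; rw [d1_const_mul hx2, e1]
  have hDDU : d1 (d1 (fun q => 2 * x2 q)) = fun q => 2 * x4 q := by
    rw [hDU]; funext q; rw [d1_const_mul hx3, e2]
  rw [hDDU, hDU, d1_const_mul hx4, d3_const_mul hx2, e3, f1]
  ring

end
end

section
/- Let x₂, x₃, x₄, z₄, z₅, z₆ : ℝ → ℂ be differentiable functions satisfying system S₁: x₂' = x₃, x₃' = x₄, x₄' = 4(3x₂x₃ + z₅), z₄' = z₅, z₅' = z₆, z₆' = 4(2x₂z₅ + x₃z₄). Then the functions a(t) = λ̂₄(x₂,x₃,x₄,z₄,z₅,z₆)(t) and b(t) = λ̂₆(x₂,x₃,x₄,z₄,z₅,z₆)(t) are constant, and the function U = 2x₂ satisfies the fourth-order equation U'''' = 10UU'' + 5(U')² − 10U³ − 8aU + 16b. -/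
/-! `λ̂₄` and `λ̂₆` are first integrals of `S₁`: differentiating them along the flow, every term
cancels. Then `U = 2x₂` has `U' = 2x₃`, `U'' = 2x₄`, `U'''' = 8(3(x₃² + x₂x₄) + z₆)`, and solving
the definitions of `a` and `b` for `z₄` and `z₆` turns this into the stated fourth-order equation. -/

theorem is_const_of_hasDerivAt_zero {𝕜 F : Type*} [RCLike 𝕜] [NormedAddCommGroup F]
    [NormedSpace 𝕜 F] {f : 𝕜 → F} (hf : ∀ t, HasDerivAt f 0 t) (s t : 𝕜) : f s = f t :=
  is_const_of_deriv_eq_zero (fun t => (hf t).differentiableAt) (fun t => (hf t).deriv) s t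

namespace S1

variable {x2 x3 x4 z4 z5 z6 : ℝ → ℂ}

theorem hasDerivAt_lambda4 (hx2 : ∀ t, HasDerivAt x2 (x3 t) t)
    (hx4 : ∀ t, HasDerivAt x4 (4 * (3 * x2 t * x3 t + z5 t)) t)
    (hz4 : ∀ t, HasDerivAt z4 (z5 t) t) (t : ℝ) :
    HasDerivAt (fun t => 1/2 * (x4 t - 6 * x2 t ^ 2 - 4 * z4 t)) 0 t :=
  ((((hx4 t).sub (((hx2 t).pow 2).const_mul 6)).sub
    ((hz4 t).const_mul 4)).const_mul (1/2 : ℂ)).congr_deriv (by push_cast; ring)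

theorem hasDerivAt_lambda6 (hx2 : ∀ t, HasDerivAt x2 (x3 t) t)
    (hx3 : ∀ t, HasDerivAt x3 (x4 t) t)
    (hx4 : ∀ t, HasDerivAt x4 (4 * (3 * x2 t * x3 t + z5 t)) t)
    (hz4 : ∀ t, HasDerivAt z4 (z5 t) t)
    (hz6 : ∀ t, HasDerivAt z6 (4 * (2 * x2 t * z5 t + x3 t * z4 t)) t) (t : ℝ) :
    HasDerivAt (fun t => -(1/4) * (2 * x2 t * (x4 t + 4 * z4 t) - 8 * x2 t ^ 3
      - x3 t ^ 2 - 2 * z6 t)) 0 t :=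
  ((((((hx2 t).const_mul 2).mul ((hx4 t).add ((hz4 t).const_mul 4))).sub
    (((hx2 t).pow 3).const_mul 8)).sub ((hx3 t).pow 2)).sub
    ((hz6 t).const_mul 2)).const_mul (-(1/4) : ℂ) |>.congr_deriv (by push_cast [Pi.add_apply]; ring)

theorem iteratedDeriv_four_two_mul (hx2 : ∀ t, HasDerivAt x2 (x3 t) t)
    (hx3 : ∀ t, HasDerivAt x3 (x4 t) t)
    (hx4 : ∀ t, HasDerivAt x4 (4 * (3 * x2 t * x3 t + z5 t)) t)
    (hz5 : ∀ t, HasDerivAt z5 (z6 t) t) :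
    iteratedDeriv 4 (fun t => 2 * x2 t) = fun t => 8 * (3 * (x3 t ^ 2 + x2 t * x4 t) + z6 t) := by
  have d1 : deriv (fun t => 2 * x2 t) = fun t => 2 * x3 t :=
    funext fun t => ((hx2 t).const_mul 2).deriv
  have d2 : deriv (fun t => 2 * x3 t) = fun t => 2 * x4 t :=
    funext fun t => ((hx3 t).const_mul 2).deriv
  have d3 : deriv (fun t => 2 * x4 t) = fun t => 8 * (3 * x2 t * x3 t + z5 t) :=
    funext fun t => ((hx4 t).const_mul 2).congr_deriv (by ring) |>.deriv
  have d4 : deriv (fun t => 8 * (3 * x2 t * x3 t + z5 t))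
      = fun t => 8 * (3 * (x3 t ^ 2 + x2 t * x4 t) + z6 t) :=
    funext fun t => ((((hx2 t).const_mul 3).mul (hx3 t)).add (hz5 t)).const_mul 8
      |>.congr_deriv (by ring) |>.deriv
  simp only [iteratedDeriv_succ', iteratedDeriv_zero, d1, d2, d3, d4]

end S1

/-- If `x₂,x₃,x₄,z₄,z₅,z₆ : ℝ → ℂ` are differentiable and satisfy system `S₁`, then
`a = λ̂₄(x₂,…,z₆)` and `b = λ̂₆(x₂,…,z₆)` are constant along trajectories, and
`U = 2x₂` satisfies `U'''' = 10UU'' + 5(U')² − 10U³ − 8aU + 16b`. -/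
theorem fourth_order_equation_from_S1 (x2 x3 x4 z4 z5 z6 : ℝ → ℂ)
    (hx2 : Differentiable ℝ x2) (hx3 : Differentiable ℝ x3) (hx4 : Differentiable ℝ x4)
    (hz4 : Differentiable ℝ z4) (hz5 : Differentiable ℝ z5) (hz6 : Differentiable ℝ z6)
    (h1 : ∀ t, deriv x2 t = x3 t) (h2 : ∀ t, deriv x3 t = x4 t)
    (h3 : ∀ t, deriv x4 t = 4 * (3 * x2 t * x3 t + z5 t))
    (h4 : ∀ t, deriv z4 t = z5 t) (h5 : ∀ t, deriv z5 t = z6 t)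
    (h6 : ∀ t, deriv z6 t = 4 * (2 * x2 t * z5 t + x3 t * z4 t))
    (a b U : ℝ → ℂ)
    (ha : a = fun t => 1/2 * (x4 t - 6 * x2 t ^ 2 - 4 * z4 t))
    (hb : b = fun t => -(1/4) * (2 * x2 t * (x4 t + 4 * z4 t) - 8 * x2 t ^ 3
      - x3 t ^ 2 - 2 * z6 t))
    (hU : U = fun t => 2 * x2 t) :
    (∀ s t, a s = a t) ∧ (∀ s t, b s = b t) ∧
    (∀ t, iteratedDeriv 4 U t = 10 * U t * iteratedDeriv 2 U t + 5 * (deriv U t) ^ 2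
      - 10 * (U t) ^ 3 - 8 * a t * U t + 16 * b t) := by
  have dx2 : ∀ t, HasDerivAt x2 (x3 t) t := fun t => h1 t ▸ (hx2 t).hasDerivAt
  have dx3 : ∀ t, HasDerivAt x3 (x4 t) t := fun t => h2 t ▸ (hx3 t).hasDerivAt
  have dx4 : ∀ t, HasDerivAt x4 _ t := fun t => h3 t ▸ (hx4 t).hasDerivAt
  have dz4 : ∀ t, HasDerivAt z4 (z5 t) t := fun t => h4 t ▸ (hz4 t).hasDerivAt
  have dz5 : ∀ t, HasDerivAt z5 (z6 t) t := fun t => h5 t ▸ (hz5 t).hasDerivAt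
  have dz6 : ∀ t, HasDerivAt z6 _ t := fun t => h6 t ▸ (hz6 t).hasDerivAt
  subst ha hb hU
  refine ⟨is_const_of_hasDerivAt_zero (S1.hasDerivAt_lambda4 dx2 dx4 dz4),
    is_const_of_hasDerivAt_zero (S1.hasDerivAt_lambda6 dx2 dx3 dx4 dz4 dz6), fun t => ?_⟩
  have dU : deriv (fun t => 2 * x2 t) = fun t => 2 * x3 t :=
    funext fun t => ((dx2 t).const_mul 2).deriv
  have d2U : iteratedDeriv 2 (fun t => 2 * x2 t) t = 2 * x4 t := by
    rw [iteratedDeriv_succ, iteratedDeriv_one, dU, ((dx3 t).const_mul 2).deriv]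
  rw [S1.iteratedDeriv_four_two_mul dx2 dx3 dx4 dz5, d2U, dU]
  ring
end

section
/- Let λ₄, λ₆ ∈ ℂ and let U : ℝ → ℂ be a six-times differentiable function satisfying the fourth-order equation U'''' = 10UU'' + 5(U')² − 10U³ − 8λ₄U + 16λ₆. Then U satisfies the parameter-free sixth-order nonlinear differential equation U'·U'''''' − U''·U''''' − 10UU'U'''' + 10(UU'' − 3(U')²)·U''' + 60U(U')³ = 0. -/
/-!
Differentiating the fourth-order equation removes `λ₆` and leaves
`F := U⁽⁵⁾ − 20U'U'' − 10UU''' + 30U²U' = −8λ₄U'`.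
Since `F` is a constant multiple of `U'`, their Wronskian `U'F' − U''F` vanishes, and this
Wronskian, expanded, is the sixth-order expression.
-/

theorem ContDiff.hasDerivAt_iteratedDeriv {𝕜 F : Type*} [NontriviallyNormedField 𝕜]
    [NormedAddCommGroup F] [NormedSpace 𝕜 F] {f : 𝕜 → F} {n : WithTop ℕ∞} (hf : ContDiff 𝕜 n f)
    {k : ℕ} (hk : k < n) (x : 𝕜) :
    HasDerivAt (iteratedDeriv k f) (iteratedDeriv (k + 1) f x) x := by
  rw [iteratedDeriv_succ]
  exact (hf.differentiable_iteratedDeriv k hk x).hasDerivAt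

theorem HasDerivAt.mul_sub_mul_eq_zero_of_eq_const_mul {𝕜 𝔸 : Type*} [NontriviallyNormedField 𝕜]
    [NormedCommRing 𝔸] [NormedAlgebra 𝕜 𝔸] {f g : 𝕜 → 𝔸} {f' g' : 𝔸} {x : 𝕜} (c : 𝔸)
    (hf : HasDerivAt f f' x) (hg : HasDerivAt g g' x) (hgf : g = fun y => c * f y) :
    f x * g' - f' * g x = 0 := by
  subst hgf
  rw [hg.unique (hf.const_mul c)]
  ring

theorem fifth_order_equation (lam4 lam6 : ℂ) (U : ℝ → ℂ) (hU : ContDiff ℝ 5 U)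
    (h : ∀ t, iteratedDeriv 4 U t = 10 * U t * iteratedDeriv 2 U t
      + 5 * (deriv U t) ^ 2 - 10 * (U t) ^ 3 - 8 * lam4 * U t + 16 * lam6) (t : ℝ) :
    iteratedDeriv 5 U t - 20 * deriv U t * iteratedDeriv 2 U t
      - 10 * U t * iteratedDeriv 3 U t + 30 * U t ^ 2 * deriv U t = -8 * lam4 * deriv U t := by
  have hd : ∀ k < 5, HasDerivAt (iteratedDeriv k U) (iteratedDeriv (k + 1) U t) t :=
    fun k hk => hU.hasDerivAt_iteratedDeriv (by exact_mod_cast hk) t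
  have hU0 : HasDerivAt U (deriv U t) t := by simpa using hd 0 (by norm_num)
  have hU1 : HasDerivAt (deriv U) (iteratedDeriv 2 U t) t := by simpa using hd 1 (by norm_num)
  have hrhs : HasDerivAt (fun s => 10 * U s * iteratedDeriv 2 U s
      + 5 * (deriv U s) ^ 2 - 10 * (U s) ^ 3 - 8 * lam4 * U s + 16 * lam6)
      (20 * deriv U t * iteratedDeriv 2 U t + 10 * U t * iteratedDeriv 3 U t
        - 30 * U t ^ 2 * deriv U t - 8 * lam4 * deriv U t) t := by
    refine (((((hU0.const_mul 10).fun_mul (hd 2 (by norm_num))).fun_add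
      ((hU1.fun_pow 2).const_mul 5)).fun_sub ((hU0.fun_pow 3).const_mul 10)).fun_sub
      (hU0.const_mul (8 * lam4))).add_const (16 * lam6) |>.congr_deriv ?_
    norm_num
    ring
  rw [(hd 4 (by norm_num)).unique (funext h ▸ hrhs)]
  ring

/-- If a six-times differentiable `U : ℝ → ℂ` satisfies
`U'''' = 10UU'' + 5(U')² − 10U³ − 8λ₄U + 16λ₆`, then it satisfies the parameter-free
sixth-order equation
`U'U'''''' − U''U''''' − 10UU'U'''' + 10(UU'' − 3(U')²)U''' + 60U(U')³ = 0`. -/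
theorem sixth_order_equation (lam4 lam6 : ℂ) (U : ℝ → ℂ)
    (hU : ContDiff ℝ 6 U)
    (h : ∀ t, iteratedDeriv 4 U t = 10 * U t * iteratedDeriv 2 U t
      + 5 * (deriv U t) ^ 2 - 10 * (U t) ^ 3 - 8 * lam4 * U t + 16 * lam6) :
    ∀ t, deriv U t * iteratedDeriv 6 U t - iteratedDeriv 2 U t * iteratedDeriv 5 U t
      - 10 * U t * deriv U t * iteratedDeriv 4 U t
      + 10 * (U t * iteratedDeriv 2 U t - 3 * (deriv U t) ^ 2) * iteratedDeriv 3 U t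
      + 60 * U t * (deriv U t) ^ 3 = 0 := by
  intro t
  have hd : ∀ k < 6, HasDerivAt (iteratedDeriv k U) (iteratedDeriv (k + 1) U t) t :=
    fun k hk => hU.hasDerivAt_iteratedDeriv (by exact_mod_cast hk) t
  have hU0 : HasDerivAt U (deriv U t) t := by simpa using hd 0 (by norm_num)
  have hU1 : HasDerivAt (deriv U) (iteratedDeriv 2 U t) t := by simpa using hd 1 (by norm_num)
  have hF : HasDerivAt (fun s => iteratedDeriv 5 U s - 20 * deriv U s * iteratedDeriv 2 U s
      - 10 * U s * iteratedDeriv 3 U s + 30 * U s ^ 2 * deriv U s)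
      (iteratedDeriv 6 U t - 20 * iteratedDeriv 2 U t ^ 2 - 30 * deriv U t * iteratedDeriv 3 U t
        - 10 * U t * iteratedDeriv 4 U t + 60 * U t * deriv U t ^ 2
        + 30 * U t ^ 2 * iteratedDeriv 2 U t) t := by
    refine ((((hd 5 (by norm_num)).fun_sub
      ((hU1.const_mul 20).fun_mul (hd 2 (by norm_num)))).fun_sub
      ((hU0.const_mul 10).fun_mul (hd 3 (by norm_num)))).fun_add
      (((hU0.fun_pow 2).const_mul 30).fun_mul hU1)).congr_deriv ?_
    norm_num
    ring
  have hW := hU1.mul_sub_mul_eq_zero_of_eq_const_mul (-8 * lam4) hF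
    (funext (fifth_order_equation lam4 lam6 U (hU.of_le (by norm_num)) h))
  linear_combination hW
end

section
/- Let λ₄, λ₆, λ₈, λ₁₀ ∈ ℂ and let U : ℝ → ℂ be a three-times differentiable function satisfying the two equations U'U''' − ½(U'')² − 5U(U')² + (5/2)U⁴ + 4λ₄U² − 16λ₆U + 8λ₄² − 32λ₈ = 0 and (U''')² − 10U(U'')² + 2(U')²U'' + 4(5U³ + 4λ₄U − 8λ₆)U'' − 2(15U² + 4λ₄)(U')² + B(U) = 0, where B(U) = 6U⁵ + 16λ₄U³ − 96λ₆U² + 96(λ₄² − 4λ₈)U + 128λ₄λ₆ − 256λ₁₀. Then U satisfies the relation (U'')⁴ − 20U(U')²(U'')² − A₁(U)(U'')² + 8(U')⁴U'' + A₂(U)(U')²U'' − A₃(U)(U')⁴ − A₄(U)(U')² + A₅(U) = 0, where A₁(U) = 10U⁴ + 16λ₄U² − 64λ₆U + 32λ₄² − 128λ₈, A₂(U) = 80U³ + 64λ₄U − 128λ₆, A₃(U) = 20U² + 32λ₄, A₄(U) = 76U⁵ + 96λ₄U³ − 256λ₆U² − 64(λ₄² − 4λ₈)U − 512λ₄λ₆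 + 1024λ₁₀, and A₅(U) = (5U⁴ + 8λ₄U² − 32λ₆U + 16λ₄² − 64λ₈)². -/
theorem quartic_relation_in_second_derivative_general (lam4 lam6 lam8 lam10 : ℂ) (U : ℝ → ℂ)
    (h1 : ∀ t, deriv U t * iteratedDeriv 3 U t - 1/2 * (iteratedDeriv 2 U t) ^ 2
      - 5 * U t * (deriv U t) ^ 2 + 5/2 * (U t) ^ 4 + 4 * lam4 * (U t) ^ 2
      - 16 * lam6 * U t + 8 * lam4 ^ 2 - 32 * lam8 = 0)
    (h2 : ∀ t, (iteratedDeriv 3 U t) ^ 2 - 10 * U t * (iteratedDeriv 2 U t) ^ 2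
      + 2 * (deriv U t) ^ 2 * iteratedDeriv 2 U t
      + 4 * (5 * (U t) ^ 3 + 4 * lam4 * U t - 8 * lam6) * iteratedDeriv 2 U t
      - 2 * (15 * (U t) ^ 2 + 4 * lam4) * (deriv U t) ^ 2
      + (6 * (U t) ^ 5 + 16 * lam4 * (U t) ^ 3 - 96 * lam6 * (U t) ^ 2
        + 96 * (lam4 ^ 2 - 4 * lam8) * U t + 128 * lam4 * lam6 - 256 * lam10) = 0) :
    ∀ t, (iteratedDeriv 2 U t) ^ 4
      - 20 * U t * (deriv U t) ^ 2 * (iteratedDeriv 2 U t) ^ 2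
      - (10 * (U t) ^ 4 + 16 * lam4 * (U t) ^ 2 - 64 * lam6 * U t + 32 * lam4 ^ 2
        - 128 * lam8) * (iteratedDeriv 2 U t) ^ 2
      + 8 * (deriv U t) ^ 4 * iteratedDeriv 2 U t
      + (80 * (U t) ^ 3 + 64 * lam4 * U t - 128 * lam6) * (deriv U t) ^ 2
        * iteratedDeriv 2 U t
      - (20 * (U t) ^ 2 + 32 * lam4) * (deriv U t) ^ 4
      - (76 * (U t) ^ 5 + 96 * lam4 * (U t) ^ 3 - 256 * lam6 * (U t) ^ 2
        - 64 * (lam4 ^ 2 - 4 * lam8) * U t - 512 * lam4 * lam6 + 1024 * lam10)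
        * (deriv U t) ^ 2
      + (5 * (U t) ^ 4 + 8 * lam4 * (U t) ^ 2 - 32 * lam6 * U t + 16 * lam4 ^ 2
        - 64 * lam8) ^ 2 = 0 := by
  intro t
  set u := U t
  set u₁ := deriv U t
  set u₂ := iteratedDeriv 2 U t
  set u₃ := iteratedDeriv 3 U t
  -- The relation is the resultant in `U'''` of `h1` and `h2`: square `h1`, solved for
  -- `U'U'''`, and substitute `(U''')²` from `h2`; this gives four times the claim.
  have h₁ : u₁ * u₃ = 1/2 * u₂ ^ 2 + 5 * u * u₁ ^ 2 - 5/2 * u ^ 4 - 4 * lam4 * u ^ 2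
      + 16 * lam6 * u - 8 * lam4 ^ 2 + 32 * lam8 := by
    linear_combination h1 t
  have h₂ : u₃ ^ 2 = 10 * u * u₂ ^ 2 - 2 * u₁ ^ 2 * u₂
      - 4 * (5 * u ^ 3 + 4 * lam4 * u - 8 * lam6) * u₂ + 2 * (15 * u ^ 2 + 4 * lam4) * u₁ ^ 2
      - (6 * u ^ 5 + 16 * lam4 * u ^ 3 - 96 * lam6 * u ^ 2 + 96 * (lam4 ^ 2 - 4 * lam8) * u
        + 128 * lam4 * lam6 - 256 * lam10) := by
    linear_combination h2 t
  have eliminated := mul_pow u₁ u₃ 2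
  rw [h₁, h₂] at eliminated
  linear_combination 4 * eliminated

/-- If a three-times differentiable `U : ℝ → ℂ` satisfies the two equations
`U'U''' − ½(U'')² − 5U(U')² + (5/2)U⁴ + 4λ₄U² − 16λ₆U + 8λ₄² − 32λ₈ = 0` and
`(U''')² − 10U(U'')² + 2(U')²U'' + 4(5U³ + 4λ₄U − 8λ₆)U'' − 2(15U² + 4λ₄)(U')² + B(U) = 0`,
then `U` satisfies
`(U'')⁴ − 20U(U')²(U'')² − A₁(U)(U'')² + 8(U')⁴U'' + A₂(U)(U')²U'' − A₃(U)(U')⁴`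
`− A₄(U)(U')² + A₅(U) = 0`. -/
theorem quartic_relation_in_second_derivative (lam4 lam6 lam8 lam10 : ℂ) (U : ℝ → ℂ)
    (hU : ContDiff ℝ 3 U)
    (h1 : ∀ t, deriv U t * iteratedDeriv 3 U t - 1/2 * (iteratedDeriv 2 U t) ^ 2
      - 5 * U t * (deriv U t) ^ 2 + 5/2 * (U t) ^ 4 + 4 * lam4 * (U t) ^ 2
      - 16 * lam6 * U t + 8 * lam4 ^ 2 - 32 * lam8 = 0)
    (h2 : ∀ t, (iteratedDeriv 3 U t) ^ 2 - 10 * U t * (iteratedDeriv 2 U t) ^ 2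
      + 2 * (deriv U t) ^ 2 * iteratedDeriv 2 U t
      + 4 * (5 * (U t) ^ 3 + 4 * lam4 * U t - 8 * lam6) * iteratedDeriv 2 U t
      - 2 * (15 * (U t) ^ 2 + 4 * lam4) * (deriv U t) ^ 2
      + (6 * (U t) ^ 5 + 16 * lam4 * (U t) ^ 3 - 96 * lam6 * (U t) ^ 2
        + 96 * (lam4 ^ 2 - 4 * lam8) * U t + 128 * lam4 * lam6 - 256 * lam10) = 0) :
    ∀ t, (iteratedDeriv 2 U t) ^ 4
      - 20 * U t * (deriv U t) ^ 2 * (iteratedDeriv 2 U t) ^ 2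
      - (10 * (U t) ^ 4 + 16 * lam4 * (U t) ^ 2 - 64 * lam6 * U t + 32 * lam4 ^ 2
        - 128 * lam8) * (iteratedDeriv 2 U t) ^ 2
      + 8 * (deriv U t) ^ 4 * iteratedDeriv 2 U t
      + (80 * (U t) ^ 3 + 64 * lam4 * U t - 128 * lam6) * (deriv U t) ^ 2
        * iteratedDeriv 2 U t
      - (20 * (U t) ^ 2 + 32 * lam4) * (deriv U t) ^ 4
      - (76 * (U t) ^ 5 + 96 * lam4 * (U t) ^ 3 - 256 * lam6 * (U t) ^ 2
        - 64 * (lam4 ^ 2 - 4 * lam8) * U t - 512 * lam4 * lam6 + 1024 * lam10)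
        * (deriv U t) ^ 2
      + (5 * (U t) ^ 4 + 8 * lam4 * (U t) ^ 2 - 32 * lam6 * U t + 16 * lam4 ^ 2
        - 64 * lam8) ^ 2 = 0 :=
  quartic_relation_in_second_derivative_general lam4 lam6 lam8 lam10 U h1 h2
end
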